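/- Riemann matrix functional relation: for every pair (a',c') ∈ {0,1}² and all complex u, v, 4 · Θ[a',c';0,0](2u,2v) · Θ[a',c';0,0](0,0) = Σ_{(b,d)∈{0,1}²} (−1)^{a'b + c'd} · θ[0,0;b,d](u,v)². -/

import Mathlib

/-!
Expanding `θ[0,0;b,d](u,v)²` as a series over pairs `(p, q)` of lattice points, the lower
characteristics only contribute the sign `(-1)^⟨p + q, (b, d)⟩`, so summing against
`(-1)^(a'b + c'd)` keeps exactly the pairs with `p + q ≡ (a', c') (mod 2)`, each with weight `4`.
These are the pairs `p = m + k + (a', c')`, `q = m - k`, and the parallelogram law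
`Q(p) + Q(q) = 2 Q(m + (a', c')/2) + 2 Q(k + (a', c')/2)` for the quadratic form `Q` of the moduli
turns the term at `(p, q)` into the product of the terms of `Θ[a',c'](2u,2v)` at `m` and of
`Θ[a',c'](0,0)` at `k`. All series converge absolutely because `Im τ` is positive definite, which
justifies the rearrangements.
-/

open Complex

/-- Genus-two theta function with real characteristics `a c b d`
(upper characteristics `a, c`, lower characteristics `b, d`),
moduli `τ₁ τ₂ τ₁₂` and complex arguments `x y`. -/
noncomputable def theta (τ₁ τ₂ τ₁₂ : ℂ) (a c b d : ℝ) (x y : ℂ) : ℂ :=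
  ∑' p : ℤ × ℤ,
    Complex.exp
      ((Real.pi : ℂ) * Complex.I *
          (τ₁ * ((p.1 : ℂ) + (a : ℂ) / 2) ^ 2 + τ₂ * ((p.2 : ℂ) + (c : ℂ) / 2) ^ 2 +
            2 * τ₁₂ * ((p.1 : ℂ) + (a : ℂ) / 2) * ((p.2 : ℂ) + (c : ℂ) / 2)) +
        2 * (Real.pi : ℂ) * Complex.I *
          (((p.1 : ℂ) + (a : ℂ) / 2) * (x + (b : ℂ) / 2) +
            ((p.2 : ℂ) + (c : ℂ) / 2) * (y + (d : ℂ) / 2)))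

/-- The same theta function with doubled moduli `2τ₁, 2τ₂, 2τ₁₂`. -/
noncomputable def Theta2 (τ₁ τ₂ τ₁₂ : ℂ) (a c b d : ℝ) (x y : ℂ) : ℂ :=
  theta (2 * τ₁) (2 * τ₂) (2 * τ₁₂) a c b d x y

open scoped Real

noncomputable section

def gaussTerm (τ₁ τ₂ τ₁₂ μ ν x y : ℂ) : ℂ :=
  cexp (π * I * (τ₁ * μ ^ 2 + τ₂ * ν ^ 2 + 2 * τ₁₂ * μ * ν) + 2 * π * I * (μ * x + ν * y))

def thetaTerm (τ₁ τ₂ τ₁₂ : ℂ) (a c b d : ℝ) (x y : ℂ) (p : ℤ × ℤ) : ℂ :=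
  gaussTerm τ₁ τ₂ τ₁₂ (p.1 + a / 2) (p.2 + c / 2) (x + b / 2) (y + d / 2)

lemma theta_eq_tsum (τ₁ τ₂ τ₁₂ : ℂ) (a c b d : ℝ) (x y : ℂ) :
    theta τ₁ τ₂ τ₁₂ a c b d x y = ∑' p, thetaTerm τ₁ τ₂ τ₁₂ a c b d x y p := rfl

lemma gaussTerm_mul_gaussTerm (τ₁ τ₂ τ₁₂ μ ν μ' ν' x y : ℂ) :
    gaussTerm τ₁ τ₂ τ₁₂ μ ν x y * gaussTerm τ₁ τ₂ τ₁₂ μ' ν' x y =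
      gaussTerm (2 * τ₁) (2 * τ₂) (2 * τ₁₂) ((μ + μ') / 2) ((ν + ν') / 2) (2 * x) (2 * y) *
        gaussTerm (2 * τ₁) (2 * τ₂) (2 * τ₁₂) ((μ - μ') / 2) ((ν - ν') / 2) 0 0 := by
  simp only [gaussTerm, ← Complex.exp_add]
  ring_nf

lemma gaussTerm_add_args (τ₁ τ₂ τ₁₂ μ ν x y s t : ℂ) :
    gaussTerm τ₁ τ₂ τ₁₂ μ ν (x + s) (y + t) =
      gaussTerm τ₁ τ₂ τ₁₂ μ ν x y * cexp (2 * π * I * (μ * s + ν * t)) := by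
  simp only [gaussTerm, ← Complex.exp_add]
  ring_nf

lemma norm_gaussTerm_ofReal (τ₁ τ₂ τ₁₂ x y : ℂ) (μ ν : ℝ) :
    ‖gaussTerm τ₁ τ₂ τ₁₂ μ ν x y‖ =
      Real.exp (-π * (τ₁.im * μ ^ 2 + τ₂.im * ν ^ 2 + 2 * τ₁₂.im * μ * ν)
        - 2 * π * (μ * x.im + ν * y.im)) := by
  rw [gaussTerm, Complex.norm_exp]
  congr 1
  simp only [sq, add_re, mul_re, ofReal_re, I_re, mul_zero, ofReal_im, I_im, mul_one, sub_self,
    sub_zero, mul_im, zero_mul, add_zero, re_ofNat, im_ofNat, zero_add, add_im, zero_sub, neg_mul]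
  ring

lemma exists_pos_mul_le_quadratic {A B C : ℝ} (hA : 0 < A) (hdet : B ^ 2 < A * C) :
    ∃ ε > 0, ∀ μ ν : ℝ, ε * μ ^ 2 + ε * ν ^ 2 ≤ A * μ ^ 2 + C * ν ^ 2 + 2 * B * μ * ν := by
  have hC : 0 < C := pos_of_mul_pos_right (by nlinarith [sq_nonneg B]) hA.le
  refine ⟨(A * C - B ^ 2) / (A + C), div_pos (by linarith) (by linarith), fun μ ν => ?_⟩
  set ε := (A * C - B ^ 2) / (A + C)
  -- this choice gives `(A - ε) * (C - ε) = B ^ 2 + ε ^ 2`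
  have hεAC : ε * (A + C) = A * C - B ^ 2 := div_mul_cancel₀ _ (by linarith)
  have hAε : 0 < A - ε := by nlinarith [sq_nonneg B]
  nlinarith [sq_nonneg ((A - ε) * μ + B * ν), sq_nonneg (ε * ν), mul_pos hAε hAε]

lemma summable_exp_neg_sq_shift {ε : ℝ} (hε : 0 < ε) (s X : ℝ) :
    Summable fun m : ℤ => Real.exp (-π * ε * (m + s) ^ 2 - 2 * π * (m + s) * X) := by
  have h := ((summable_jacobiTheta₂_term_iff ((ε * s + X) * I) (ε * I)).2
    (by simpa using hε)).norm.mul_left (Real.exp (-π * ε * s ^ 2 - 2 * π * s * X))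
  refine h.congr fun m => ?_
  rw [norm_jacobiTheta₂_term, ← Real.exp_add]
  congr 1
  simp only [neg_mul, mul_im, ofReal_re, I_im, mul_one, ofReal_im, I_re, mul_zero, add_zero, add_re,
    mul_re, sub_zero, add_im, zero_mul]
  ring

lemma norm_thetaTerm (τ₁ τ₂ τ₁₂ : ℂ) (a c b d : ℝ) (x y : ℂ) (p : ℤ × ℤ) :
    ‖thetaTerm τ₁ τ₂ τ₁₂ a c b d x y p‖ =
      Real.exp (-π * (τ₁.im * (p.1 + a / 2) ^ 2 + τ₂.im * (p.2 + c / 2) ^ 2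
        + 2 * τ₁₂.im * (p.1 + a / 2) * (p.2 + c / 2))
        - 2 * π * ((p.1 + a / 2) * x.im + (p.2 + c / 2) * y.im)) := by
  have h := norm_gaussTerm_ofReal τ₁ τ₂ τ₁₂ (x + b / 2) (y + d / 2) (p.1 + a / 2) (p.2 + c / 2)
  push_cast at h
  simpa [thetaTerm] using h

lemma summable_norm_thetaTerm {τ₁ τ₂ τ₁₂ : ℂ} (hτ₁ : 0 < τ₁.im)
    (hτ : τ₁₂.im ^ 2 < τ₁.im * τ₂.im) (a c b d : ℝ) (x y : ℂ) :
    Summable fun p : ℤ × ℤ => ‖thetaTerm τ₁ τ₂ τ₁₂ a c b d x y p‖ := by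
  obtain ⟨ε, hε, hQ⟩ := exists_pos_mul_le_quadratic hτ₁ hτ
  refine Summable.of_nonneg_of_le (fun _ => norm_nonneg _) (fun p => ?_)
    ((summable_exp_neg_sq_shift hε (a / 2) x.im).mul_of_nonneg
      (summable_exp_neg_sq_shift hε (c / 2) y.im)
      (fun _ => (Real.exp_pos _).le) (fun _ => (Real.exp_pos _).le))
  rw [norm_thetaTerm, ← Real.exp_add, Real.exp_le_exp]
  nlinarith [hQ (p.1 + a / 2) (p.2 + c / 2), Real.pi_pos]

lemma hasSum_thetaTerm_mul_thetaTerm {τ₁ τ₂ τ₁₂ : ℂ} (hτ₁ : 0 < τ₁.im)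
    (hτ : τ₁₂.im ^ 2 < τ₁.im * τ₂.im) (a c b d a' c' b' d' : ℝ) (x y x' y' : ℂ) :
    HasSum (fun z : (ℤ × ℤ) × (ℤ × ℤ) =>
        thetaTerm τ₁ τ₂ τ₁₂ a c b d x y z.1 * thetaTerm τ₁ τ₂ τ₁₂ a' c' b' d' x' y' z.2)
      (theta τ₁ τ₂ τ₁₂ a c b d x y * theta τ₁ τ₂ τ₁₂ a' c' b' d' x' y') := by
  have hf := summable_norm_thetaTerm hτ₁ hτ a c b d x y
  have hg := summable_norm_thetaTerm hτ₁ hτ a' c' b' d' x' y'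
  rw [theta_eq_tsum, theta_eq_tsum, tsum_mul_tsum_of_summable_norm hf hg]
  exact (summable_mul_of_summable_norm hf hg).hasSum

def parityWeight (a c : ℤ) (z : (ℤ × ℤ) × (ℤ × ℤ)) : ℂ :=
  (1 + (-1) ^ (a + z.1.1 + z.2.1)) * (1 + (-1) ^ (c + z.1.2 + z.2.2))

def parallelogramEmb (a c : ℤ) (w : (ℤ × ℤ) × (ℤ × ℤ)) : (ℤ × ℤ) × (ℤ × ℤ) :=
  (w.1 + w.2 + (a, c), w.1 - w.2)

lemma parallelogramEmb_injective (a c : ℤ) : Function.Injective (parallelogramEmb a c) := by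
  intro w w' h
  simp only [parallelogramEmb, Prod.ext_iff, Prod.fst_add, Prod.snd_add, Prod.fst_sub,
    Prod.snd_sub] at h ⊢
  omega

lemma parityWeight_eq_zero_of_notMem_range {a c : ℤ} {z : (ℤ × ℤ) × (ℤ × ℤ)}
    (hz : z ∉ Set.range (parallelogramEmb a c)) : parityWeight a c z = 0 := by
  have even_of_ne_zero (k : ℤ) (hk : 1 + (-1 : ℂ) ^ k ≠ 0) : Even k := by
    by_contra hodd
    rw [(Int.not_even_iff_odd.1 hodd).neg_one_zpow, add_neg_cancel] at hk
    exact hk rfl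
  by_contra hne
  obtain ⟨h₁, h₂⟩ := mul_ne_zero_iff.1 hne
  obtain ⟨s, hs⟩ := even_of_ne_zero _ h₁
  obtain ⟨t, ht⟩ := even_of_ne_zero _ h₂
  refine hz ⟨((s - a, t - c), (s - a - z.2.1, t - c - z.2.2)), ?_⟩
  simp only [parallelogramEmb, Prod.ext_iff, Prod.fst_add, Prod.snd_add, Prod.fst_sub,
    Prod.snd_sub]
  omega

lemma parityWeight_parallelogramEmb (a c : ℤ) (w : (ℤ × ℤ) × (ℤ × ℤ)) :
    parityWeight a c (parallelogramEmb a c w) = 4 := by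
  have h₁ : a + (w.1.1 + w.2.1 + a) + (w.1.1 - w.2.1) = (w.1.1 + a) + (w.1.1 + a) := by ring
  have h₂ : c + (w.1.2 + w.2.2 + c) + (w.1.2 - w.2.2) = (w.1.2 + c) + (w.1.2 + c) := by ring
  simp only [parityWeight, parallelogramEmb, Prod.fst_add, Prod.snd_add, Prod.fst_sub,
    Prod.snd_sub, h₁, h₂, Even.neg_one_zpow ⟨_, rfl⟩]
  norm_num

lemma thetaTerm_natCast_lower_char (τ₁ τ₂ τ₁₂ x y : ℂ) (b d : ℕ) (p : ℤ × ℤ) :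
    thetaTerm τ₁ τ₂ τ₁₂ 0 0 b d x y p =
      (-1) ^ (p.1 * b + p.2 * d) * thetaTerm τ₁ τ₂ τ₁₂ 0 0 0 0 x y p := by
  simp only [thetaTerm, Complex.ofReal_zero, zero_div, add_zero]
  rw [gaussTerm_add_args, mul_comm, ← Complex.exp_pi_mul_I, ← Complex.exp_int_mul]
  push_cast
  ring_nf

lemma sum_neg_one_pow_mul_thetaTerm_mul_thetaTerm (τ₁ τ₂ τ₁₂ x y : ℂ) (a c : ℕ)
    (z : (ℤ × ℤ) × (ℤ × ℤ)) :
    ∑ b ∈ Finset.range 2, ∑ d ∈ Finset.range 2, (-1 : ℂ) ^ (a * b + c * d) *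
        (thetaTerm τ₁ τ₂ τ₁₂ 0 0 b d x y z.1 * thetaTerm τ₁ τ₂ τ₁₂ 0 0 b d x y z.2) =
      parityWeight a c z *
        (thetaTerm τ₁ τ₂ τ₁₂ 0 0 0 0 x y z.1 * thetaTerm τ₁ τ₂ τ₁₂ 0 0 0 0 x y z.2) := by
  simp only [Finset.sum_range_succ, Finset.sum_range_zero, zero_add, thetaTerm_natCast_lower_char,
    parityWeight, Nat.cast_zero, Nat.cast_one, mul_zero, mul_one, add_zero, zero_add, pow_zero,
    zpow_zero, zpow_add₀ (by norm_num : (-1 : ℂ) ≠ 0), zpow_natCast]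
  ring

lemma thetaTerm_mul_thetaTerm_parallelogramEmb (τ₁ τ₂ τ₁₂ x y : ℂ) (a c : ℤ)
    (w : (ℤ × ℤ) × (ℤ × ℤ)) :
    thetaTerm τ₁ τ₂ τ₁₂ 0 0 0 0 x y (parallelogramEmb a c w).1 *
        thetaTerm τ₁ τ₂ τ₁₂ 0 0 0 0 x y (parallelogramEmb a c w).2 =
      thetaTerm (2 * τ₁) (2 * τ₂) (2 * τ₁₂) a c 0 0 (2 * x) (2 * y) w.1 *
        thetaTerm (2 * τ₁) (2 * τ₂) (2 * τ₁₂) a c 0 0 0 0 w.2 := by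
  simp only [thetaTerm, parallelogramEmb, gaussTerm_mul_gaussTerm, Complex.ofReal_zero, zero_div,
    add_zero, Prod.fst_add, Prod.snd_add, Prod.fst_sub, Prod.snd_sub]
  push_cast
  ring_nf

end

theorem riemann_matrix_functional_relation_general (τ₁ τ₂ τ₁₂ : ℂ)
    (hτ₁ : 0 < τ₁.im) (hτ : τ₁₂.im ^ 2 < τ₁.im * τ₂.im)
    (a' c' : ℕ)
    (u v : ℂ) :
    4 * Theta2 τ₁ τ₂ τ₁₂ a' c' 0 0 (2 * u) (2 * v) * Theta2 τ₁ τ₂ τ₁₂ a' c' 0 0 0 0 =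
      ∑ b ∈ Finset.range 2, ∑ d ∈ Finset.range 2,
        (-1 : ℂ) ^ (a' * b + c' * d) * theta τ₁ τ₂ τ₁₂ 0 0 b d u v ^ 2 := by
  set G := fun z => parityWeight a' c' z *
    (thetaTerm τ₁ τ₂ τ₁₂ 0 0 0 0 u v z.1 * thetaTerm τ₁ τ₂ τ₁₂ 0 0 0 0 u v z.2)
  have h2τ₁ : 0 < (2 * τ₁).im := by simpa using hτ₁
  have h2τ : (2 * τ₁₂).im ^ 2 < (2 * τ₁).im * (2 * τ₂).im := by
    simp only [mul_im, re_ofNat, im_ofNat, zero_mul, add_zero]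
    nlinarith
  have hLHS : HasSum (G ∘ parallelogramEmb a' c')
      (4 * Theta2 τ₁ τ₂ τ₁₂ a' c' 0 0 (2 * u) (2 * v) * Theta2 τ₁ τ₂ τ₁₂ a' c' 0 0 0 0) := by
    rw [mul_assoc, Theta2, Theta2]
    refine ((hasSum_thetaTerm_mul_thetaTerm h2τ₁ h2τ a' c' 0 0 a' c' 0 0
      (2 * u) (2 * v) 0 0).mul_left 4).congr_fun fun w => ?_
    simp only [G, Function.comp, parityWeight_parallelogramEmb,
      thetaTerm_mul_thetaTerm_parallelogramEmb, Int.cast_natCast]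
  have hRHS : HasSum G (∑ b ∈ Finset.range 2, ∑ d ∈ Finset.range 2,
      (-1 : ℂ) ^ (a' * b + c' * d) * theta τ₁ τ₂ τ₁₂ 0 0 b d u v ^ 2) := by
    simp only [G, ← sum_neg_one_pow_mul_thetaTerm_mul_thetaTerm, sq]
    exact hasSum_sum fun b _ => hasSum_sum fun d _ =>
      (hasSum_thetaTerm_mul_thetaTerm hτ₁ hτ _ _ _ _ _ _ _ _ _ _ _ _).mul_left _
  exact (((parallelogramEmb_injective a' c').hasSum_iff
    fun z hz => by simp only [G, parityWeight_eq_zero_of_notMem_range hz, zero_mul]).1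
      hLHS).unique hRHS

theorem riemann_matrix_functional_relation (τ₁ τ₂ τ₁₂ : ℂ)
    (hτ₁ : 0 < τ₁.im) (hτ₂ : 0 < τ₂.im) (hτ : τ₁₂.im ^ 2 < τ₁.im * τ₂.im)
    (a' c' : ℕ) (ha : a' ∈ ({0, 1} : Set ℕ)) (hc : c' ∈ ({0, 1} : Set ℕ))
    (u v : ℂ) :
    4 * Theta2 τ₁ τ₂ τ₁₂ a' c' 0 0 (2 * u) (2 * v) * Theta2 τ₁ τ₂ τ₁₂ a' c' 0 0 0 0 =
      ∑ b ∈ Finset.range 2, ∑ d ∈ Finset.range 2,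
        (-1 : ℂ) ^ (a' * b + c' * d) * theta τ₁ τ₂ τ₁₂ 0 0 b d u v ^ 2 :=
  riemann_matrix_functional_relation_general τ₁ τ₂ τ₁₂ hτ₁ hτ a' c' u v
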